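/- Let F : ℝ^{n×n} → ℝ^{n×n} be polynomial Lipschitz continuous, let A₀ be a singular matrix of rank n − 1, and let δ > 0. Then for every E > 0 there exists an invertible matrix A with ‖A − A₀‖ < δ such that ‖A⁻¹ − F(A)‖ > E. -/
import Mathlib


attribute [local instance] Matrix.frobeniusNormedAddCommGroup
attribute [local instance] Matrix.frobeniusNormedSpace

/-- Polynomial Lipschitz continuity. -/
def PolyLip {E F : Type*} [NormedAddCommGroup E] [NormedAddCommGroup F] (f : E → F) : Prop :=
  ∃ (N : ℕ) (p : ℕ → MvPolynomial (Fin 2) ℝ),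
    (∀ i m, 0 ≤ (p i).coeff m) ∧
    ∀ x y : E, ‖f x - f y‖ ≤ ∑ i ∈ Finset.range (N + 1),
      (MvPolynomial.eval ![‖x‖, ‖y‖] (p i)) * ‖x - y‖ ^ i

lemma mv_eval_nonneg (q : MvPolynomial (Fin 2) ℝ) (hq : ∀ m, 0 ≤ q.coeff m)
    (x : Fin 2 → ℝ) (hx : ∀ i, 0 ≤ x i) : 0 ≤ MvPolynomial.eval x q := by
  rw [MvPolynomial.eval_eq]
  refine Finset.sum_nonneg fun d _ => mul_nonneg (hq d) ?_
  exact Finset.prod_nonneg fun i _ => pow_nonneg (hx i) _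

lemma mv_eval_mono (q : MvPolynomial (Fin 2) ℝ) (hq : ∀ m, 0 ≤ q.coeff m)
    (x y : Fin 2 → ℝ) (hx : ∀ i, 0 ≤ x i) (hxy : ∀ i, x i ≤ y i) :
    MvPolynomial.eval x q ≤ MvPolynomial.eval y q := by
  rw [MvPolynomial.eval_eq, MvPolynomial.eval_eq]
  refine Finset.sum_le_sum fun d _ => mul_le_mul_of_nonneg_left ?_ (hq d)
  refine Finset.prod_le_prod (fun i _ => pow_nonneg (hx i) _)
    (fun i _ => pow_le_pow_left₀ (hx i) (hxy i) _)

lemma eval_charpoly' {n : ℕ} (M : Matrix (Fin n) (Fin n) ℝ) (t : ℝ) :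
    (M.charpoly).eval t = (t • (1 : Matrix (Fin n) (Fin n) ℝ) - M).det := by
  rw [Matrix.charpoly, ← Polynomial.coe_evalRingHom, RingHom.map_det]
  congr 1
  ext i j
  by_cases h : i = j
  · subst h
    simp [Matrix.charmatrix_apply_eq, Matrix.one_apply, Matrix.smul_apply]
  · simp [Matrix.charmatrix_apply_ne _ _ _ h, Matrix.one_apply_ne h, Matrix.smul_apply]

lemma entry_le_frobenius {n : ℕ} (M : Matrix (Fin n) (Fin n) ℝ) (i j : Fin n) :
    |M i j| ≤ ‖M‖ := by
  rw [Matrix.frobenius_norm_def]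
  have h0 : (0:ℝ) ≤ |M i j| := abs_nonneg _
  have key : |M i j| ^ (2:ℝ) ≤ ∑ i, ∑ j, ‖M i j‖ ^ (2:ℝ) := by
    have h1 : ‖M i j‖ ^ (2:ℝ) ≤ ∑ j, ‖M i j‖ ^ (2:ℝ) :=
      Finset.single_le_sum (fun k _ => Real.rpow_nonneg (norm_nonneg _) _) (Finset.mem_univ j)
    calc |M i j| ^ (2:ℝ) = ‖M i j‖ ^ (2:ℝ) := rfl
      _ ≤ ∑ j, ‖M i j‖ ^ (2:ℝ) := h1
      _ ≤ ∑ i, ∑ j, ‖M i j‖ ^ (2:ℝ) :=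
        Finset.single_le_sum
          (fun k _ => Finset.sum_nonneg fun l _ => Real.rpow_nonneg (norm_nonneg _) _)
          (Finset.mem_univ i)
  have := Real.rpow_le_rpow (Real.rpow_nonneg h0 _) key (by norm_num : (0:ℝ) ≤ 1/2)
  have heq : (|M i j| ^ (2:ℝ)) ^ ((1:ℝ)/2) = |M i j| := by
    rw [← Real.rpow_mul h0]; norm_num
  linarith [this, heq.symm.le, heq.le]

theorem no_pointwise_approx {n : ℕ}
    (F : Matrix (Fin n) (Fin n) ℝ → Matrix (Fin n) (Fin n) ℝ) (hF : PolyLip F)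
    (A₀ : Matrix (Fin n) (Fin n) ℝ) (hdet : A₀.det = 0) (hrank : A₀.rank = n - 1)
    (δ : ℝ) (hδ : 0 < δ) :
    ∀ E > (0 : ℝ), ∃ A : Matrix (Fin n) (Fin n) ℝ,
      IsUnit A.det ∧ ‖A - A₀‖ < δ ∧ E < ‖A⁻¹ - F A‖ := by
  intro E hE
  obtain ⟨N, p, hcoeff, hlip⟩ := hF
  obtain ⟨v, hv0, hv⟩ := Matrix.exists_mulVec_eq_zero_iff.mpr hdet
  obtain ⟨j, hj⟩ := Function.ne_iff.mp hv0
  simp only [Pi.zero_apply] at hj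
  set S : ℝ := ∑ k, |v k| with hSdef
  have hSpos : 0 < S :=
    Finset.sum_pos' (fun k _ => abs_nonneg _) ⟨j, Finset.mem_univ j, abs_pos.mpr hj⟩
  set c : ℝ := |v j| / S with hcdef
  have hc : 0 < c := div_pos (abs_pos.mpr hj) hSpos
  have hynn : ∀ i, 0 ≤ (![‖A₀‖ + δ, ‖A₀‖] : Fin 2 → ℝ) i := by
    intro k; fin_cases k <;> simp <;> positivity
  set B : ℝ := ‖F A₀‖ + ∑ i ∈ Finset.range (N + 1),
      MvPolynomial.eval ![‖A₀‖ + δ, ‖A₀‖] (p i) * δ ^ i with hBdef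
  have hB : 0 ≤ B := by
    refine add_nonneg (norm_nonneg _) (Finset.sum_nonneg fun i _ => ?_)
    exact mul_nonneg (mv_eval_nonneg _ (hcoeff i) _ hynn) (pow_nonneg hδ.le _)
  set ε : ℝ := min (δ / (‖(1 : Matrix (Fin n) (Fin n) ℝ)‖ + 1)) (c / (E + B)) with hεdef
  have hεpos : 0 < ε :=
    lt_min (div_pos hδ (by positivity)) (div_pos hc (by linarith))
  have hfin := Polynomial.finite_setOf_isRoot (Matrix.charpoly_monic (-A₀)).ne_zero
  obtain ⟨t, htmem, hroot⟩ :
      ∃ t ∈ Set.Ioo (0:ℝ) ε, ((-A₀).charpoly).eval t ≠ 0 := by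
    by_contra h
    push_neg at h
    exact Set.Ioo_infinite hεpos (hfin.subset fun x hx => h x hx)
  obtain ⟨ht0, htε⟩ := htmem
  set A : Matrix (Fin n) (Fin n) ℝ := A₀ + t • (1 : Matrix (Fin n) (Fin n) ℝ) with hAdef
  have hdetA : A.det ≠ 0 := by
    have he := eval_charpoly' (-A₀) t
    rw [sub_neg_eq_add] at he
    rw [he] at hroot
    have : t • (1 : Matrix (Fin n) (Fin n) ℝ) + A₀ = A := by rw [hAdef, add_comm]
    rwa [this] at hroot
  have hUnit : IsUnit A.det := isUnit_iff_ne_zero.mpr hdetA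
  have hdiff : A - A₀ = t • (1 : Matrix (Fin n) (Fin n) ℝ) := by
    rw [hAdef]; abel
  have hnormd : ‖A - A₀‖ = t * ‖(1 : Matrix (Fin n) (Fin n) ℝ)‖ := by
    rw [hdiff, norm_smul, Real.norm_eq_abs, abs_of_pos ht0]
  have hnorm : ‖A - A₀‖ < δ := by
    have h1 : t < δ / (‖(1 : Matrix (Fin n) (Fin n) ℝ)‖ + 1) :=
      lt_of_lt_of_le htε (min_le_left _ _)
    rw [lt_div_iff₀ (by positivity)] at h1
    have h2 : t * ‖(1 : Matrix (Fin n) (Fin n) ℝ)‖ ≤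
        t * (‖(1 : Matrix (Fin n) (Fin n) ℝ)‖ + 1) := by nlinarith
    rw [hnormd]; linarith
  have hAv : A.mulVec v = t • v := by
    rw [hAdef, Matrix.add_mulVec, hv, Matrix.smul_mulVec, Matrix.one_mulVec, zero_add]
  have hinv : t • (A⁻¹.mulVec v) = v := by
    rw [← Matrix.mulVec_smul, ← hAv, Matrix.mulVec_mulVec,
      Matrix.nonsing_inv_mul A hUnit, Matrix.one_mulVec]
  have hivj : t * ((A⁻¹.mulVec v) j) = v j := by
    have := congrFun hinv j
    simpa using this
  have hnormbig : c / t ≤ ‖A⁻¹‖ := by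
    have h1 : |(A⁻¹.mulVec v) j| ≤ ‖A⁻¹‖ * S := by
      calc |(A⁻¹.mulVec v) j| = |∑ k, A⁻¹ j k * v k| := rfl
        _ ≤ ∑ k, |A⁻¹ j k * v k| := Finset.abs_sum_le_sum_abs _ _
        _ ≤ ∑ k, ‖A⁻¹‖ * |v k| := Finset.sum_le_sum fun k _ => by
            rw [abs_mul]
            exact mul_le_mul_of_nonneg_right (entry_le_frobenius _ _ _) (abs_nonneg _)
        _ = ‖A⁻¹‖ * S := by rw [← Finset.mul_sum]
    have h2 : |v j| ≤ t * (‖A⁻¹‖ * S) := by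
      rw [← hivj, abs_mul, abs_of_pos ht0]
      exact mul_le_mul_of_nonneg_left h1 ht0.le
    rw [hcdef, div_le_iff₀ ht0, div_le_iff₀ hSpos] at *
    nlinarith
  have hAA0 : ‖A - A₀‖ ≤ δ := hnorm.le
  have hAn : ‖A‖ ≤ ‖A₀‖ + δ := by
    calc ‖A‖ = ‖A₀ + (A - A₀)‖ := by rw [add_sub_cancel]
      _ ≤ ‖A₀‖ + ‖A - A₀‖ := norm_add_le _ _
      _ ≤ ‖A₀‖ + δ := by linarith
  have hFA : ‖F A‖ ≤ B := by
    have hlb := hlip A A₀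
    have hsum : ∑ i ∈ Finset.range (N + 1),
        MvPolynomial.eval ![‖A‖, ‖A₀‖] (p i) * ‖A - A₀‖ ^ i ≤
        ∑ i ∈ Finset.range (N + 1),
        MvPolynomial.eval ![‖A₀‖ + δ, ‖A₀‖] (p i) * δ ^ i := by
      refine Finset.sum_le_sum fun i _ => ?_
      have hxnn : ∀ k, 0 ≤ (![‖A‖, ‖A₀‖] : Fin 2 → ℝ) k := by
        intro k; fin_cases k <;> simp
      refine mul_le_mul (mv_eval_mono _ (hcoeff i) _ _ hxnn ?_)
        (pow_le_pow_left₀ (norm_nonneg _) hAA0 i)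
        (pow_nonneg (norm_nonneg _) i) (mv_eval_nonneg _ (hcoeff i) _ hynn)
      intro k; fin_cases k <;> simp [hAn]
    have h5 : ‖F A‖ - ‖F A₀‖ ≤ ‖F A - F A₀‖ := norm_sub_norm_le _ _
    rw [hBdef]; linarith
  refine ⟨A, hUnit, hnorm, ?_⟩
  have h3 : E + B < c / t := by
    have h6 : t < c / (E + B) := lt_of_lt_of_le htε (min_le_right _ _)
    rw [lt_div_iff₀ (by linarith : (0:ℝ) < E + B)] at h6
    rw [lt_div_iff₀ ht0]; linarith
  have h4 : ‖A⁻¹‖ - ‖F A‖ ≤ ‖A⁻¹ - F A‖ := norm_sub_norm_le _ _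
  linarith
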